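/- arXiv:1607.07235 — 6 statements merged into one kernel-verified Lean document; each statement's English description precedes it below -/
import Mathlib

section
/- For every n ≥ 1, W_{n+2} = U_n V_n V_n V_n V_{n−1} V_n, where juxtaposition denotes concatenation of words. -/
/-- The words `W n` over the alphabet `{1,2}`:
`W 0 = ε`, `W 1 = 1`, `W (n+2) = W (n+1) 2 W n 2 W (n+1)`. -/
def W : ℕ → List ℕ
  | 0 => []
  | 1 => [1]
  | (n+2) => W (n+1) ++ [2] ++ W n ++ [2] ++ W (n+1)

/-- `U n = W n 2 W (n-1)` (for `n ≥ 1`). -/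
def U (n : ℕ) : List ℕ := W n ++ [2] ++ W (n-1)

/-- `V n = 2 W n` (so in particular `V 0 = 2`). -/
def V (n : ℕ) : List ℕ := [2] ++ W n

/-- For every `n ≥ 1`, `W (n+2) = U n V n V n V n V (n-1) V n`. -/
theorem W_decomposition (n : ℕ) (hn : 1 ≤ n) :
    W (n+2) = U n ++ V n ++ V n ++ V n ++ V (n-1) ++ V n := by
  obtain ⟨m, rfl⟩ := Nat.exists_eq_add_of_le' hn
  -- with `n = m + 1` the recurrence unfolds `W (m+3)` and both copies of `W (m+2)`,
  -- and the two sides become the same word in `W (m+1)` and `W m`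
  simp only [W, U, V, Nat.add_sub_cancel, List.append_assoc, List.cons_append]
end

section
/- For every n ≥ 1, W_{n+3} = U'_n U'_n W_{n−1} 2 W_n 2 W_{n+2}, where U'_n = W_{n+1} 2 W_n 2 and juxtaposition denotes concatenation of words. -/
/-- `U' n = W (n+1) 2 W n 2` (for `n ≥ 1`). -/
def U' (n : ℕ) : List ℕ := W (n+1) ++ [2] ++ W n ++ [2]

theorem W_add_two_eq_U'_append (n : ℕ) : W (n + 2) = U' n ++ W (n + 1) := by
  simp only [W, U', List.append_assoc]

theorem W_append_two_W_append_two (n : ℕ) :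
    W (n + 2) ++ [2] ++ W (n + 2) ++ [2] = U' (n + 1) ++ W n ++ [2] ++ W (n + 1) ++ [2] := by
  nth_rw 2 [W]
  simp only [U', List.append_assoc]

/-- For every `n ≥ 1`, `W (n+3) = U' n U' n W (n-1) 2 W n 2 W (n+2)`. -/
theorem W_decomposition' (n : ℕ) (hn : 1 ≤ n) :
    W (n+3) = U' n ++ U' n ++ W (n-1) ++ [2] ++ W n ++ [2] ++ W (n+2) := by
  obtain ⟨m, rfl⟩ : ∃ m, n = m + 1 := ⟨n - 1, by omega⟩
  calc W (m + 1 + 3)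
      = W (m + 3) ++ [2] ++ W (m + 2) ++ [2] ++ W (m + 3) := by rw [W]
    _ = U' (m + 1) ++ (W (m + 2) ++ [2] ++ W (m + 2) ++ [2]) ++ W (m + 3) := by
        rw [W_add_two_eq_U'_append (m + 1)]; simp only [List.append_assoc]
    _ = U' (m + 1) ++ U' (m + 1) ++ W (m + 1 - 1) ++ [2] ++ W (m + 1) ++ [2] ++ W (m + 1 + 2) := by
        rw [W_append_two_W_append_two, Nat.add_sub_cancel]; simp only [List.append_assoc]
end

section
/- Define words F_n, G_n, H_n by (F_1, G_1, H_1) = (ε, U_1, V_1) and, for n ≥ 2, F_n = 2W_1 2W_2 ⋯ 2W_{n−1}, H_n = 2 G_{n−1}, G_n = U_{n−1} H_{n−1}. Then for every n ≥ 1: U_n = G_n F_n, V_n = H_n F_n, the words G_n and H_n are nonempty, and the last letter of G_n is different from the last letter of H_n. -/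
/-- `F 1 = ε` and `F n = 2 W 1 2 W 2 ⋯ 2 W (n-1)` for `n ≥ 2`. -/
def F : ℕ → List ℕ
  | 0 => []
  | 1 => []
  | (n+2) => F (n+1) ++ [2] ++ W (n+1)

/-- `G 1 = U 1`, and `G n = U (n-1) H (n-1)` for `n ≥ 2`,
where `H 1 = V 1` and `H n = 2 G (n-1)` for `n ≥ 2`. -/
def G : ℕ → List ℕ
  | 0 => []
  | 1 => U 1
  | 2 => U 1 ++ V 1
  | (n+3) => U (n+2) ++ ([2] ++ G (n+1))

/-- `H 1 = V 1` and `H n = 2 G (n-1)` for `n ≥ 2`. -/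
def H : ℕ → List ℕ
  | 0 => []
  | 1 => V 1
  | (n+2) => [2] ++ G (n+1)

/-! Both factorizations come from one joint induction: unfolding `W (n+2)` gives
`U (n+2) = U (n+1) V (n+1) 2 W (n+1)` and `V (n+2) = 2 U (n+1) 2 W (n+1)`, and the trailing
`2 W (n+1)` is exactly what `F (n+2)` adds to `F (n+1)`. Since `G (n+2)` ends with `H (n+1)`
and `H (n+2)` ends with `G (n+1)`, the last letters of `G` and `H` swap at each step, so they
stay distinct once they differ for `n = 1`. -/

lemma U_add_two (n : ℕ) : U (n + 2) = U (n + 1) ++ V (n + 1) ++ [2] ++ W (n + 1) := by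
  simp [U, V, W]

lemma V_add_two (n : ℕ) : V (n + 2) = [2] ++ U (n + 1) ++ [2] ++ W (n + 1) := by
  simp [U, V, W]

lemma G_add_two (n : ℕ) : G (n + 2) = U (n + 1) ++ H (n + 1) := by
  cases n <;> rfl

lemma H_add_two (n : ℕ) : H (n + 2) = [2] ++ G (n + 1) := rfl

lemma U_V_eq_append_F (n : ℕ) :
    U (n + 1) = G (n + 1) ++ F (n + 1) ∧ V (n + 1) = H (n + 1) ++ F (n + 1) := by
  induction n with
  | zero => exact ⟨rfl, rfl⟩
  | succ n ih =>
    obtain ⟨hU, hV⟩ := ih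
    constructor
    · rw [U_add_two, hV, G_add_two, F]
      simp only [List.append_assoc]
    · rw [V_add_two, hU, H_add_two, F]
      simp only [List.append_assoc]

lemma G_ne_nil (n : ℕ) : G (n + 1) ≠ [] := by
  cases n with
  | zero => simp [G, U]
  | succ n => simp [G_add_two, U]

lemma H_ne_nil (n : ℕ) : H (n + 1) ≠ [] := by
  cases n with
  | zero => simp [H, V]
  | succ n => simp [H_add_two]

lemma getLast?_G_add_two (n : ℕ) : (G (n + 2)).getLast? = (H (n + 1)).getLast? := by
  rw [G_add_two, List.getLast?_append_of_ne_nil _ (H_ne_nil n)]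

lemma getLast?_H_add_two (n : ℕ) : (H (n + 2)).getLast? = (G (n + 1)).getLast? := by
  rw [H_add_two, List.getLast?_append_of_ne_nil _ (G_ne_nil n)]

lemma getLast?_G_ne_getLast?_H (n : ℕ) : (G (n + 1)).getLast? ≠ (H (n + 1)).getLast? := by
  induction n with
  | zero => decide
  | succ n ih =>
    rw [getLast?_G_add_two, getLast?_H_add_two]
    exact ih.symm

/-- For every `n ≥ 1`: `U n = G n F n`, `V n = H n F n`, the words `G n` and `H n`
are nonempty, and the last letter of `G n` differs from the last letter of `H n`. -/
theorem UV_factorization (n : ℕ) (hn : 1 ≤ n) :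
    U n = G n ++ F n ∧ V n = H n ++ F n ∧
    G n ≠ [] ∧ H n ≠ [] ∧ (G n).getLast? ≠ (H n).getLast? := by
  obtain ⟨m, rfl⟩ := Nat.exists_eq_add_of_le' hn
  exact ⟨(U_V_eq_append_F m).1, (U_V_eq_append_F m).2, G_ne_nil m, H_ne_nil m,
    getLast?_G_ne_getLast?_H m⟩
end

section
/- There exists a sequence (I_n)_{n≥0} of nonempty finite words over {1,2} with I_0 = 1 and I_1 = 21, such that for every n ≥ 1: V_{n−1} V_n = 2 J_n I_n, V_n = 2 J_n I_{n−1}, and the first letter of I_n is different from the first letter of I_{n−1}. -/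
def J : ℕ → List ℕ
  | 0 => []
  | 1 => []
  | (n+2) => W (n+1) ++ [2] ++ J (n+1)

def I : ℕ → List ℕ
  | 0 => [1]
  | 1 => [2, 1]
  | (n+2) => I n ++ [2] ++ W n ++ [2] ++ W (n+1)

theorem head?_I : ∀ n, (I n).head? = some (n % 2 + 1)
  | 0 => rfl
  | 1 => rfl
  | (n+2) => by
    obtain ⟨t, h⟩ : ∃ t, I n = (n % 2 + 1) :: t := List.head?_eq_some_iff.mp (head?_I n)
    simp [I, h, Nat.add_mod_right]

theorem I_ne_nil (n : ℕ) : I n ≠ [] := by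
  simp [← List.head?_eq_none_iff, head?_I n]

theorem J_succ_append_I : ∀ n, J (n+1) ++ I n = W (n+1)
  | 0 => rfl
  | 1 => rfl
  | (n+2) => by
    simp only [J, I, W, List.append_assoc]
    rw [← J_succ_append_I n]
    simp

theorem J_succ_append_I_succ (n : ℕ) : J (n+1) ++ I (n+1) = W n ++ [2] ++ W (n+1) := by
  cases n with
  | zero => rfl
  | succ m =>
    simp only [J, I, W, List.append_assoc]
    rw [← J_succ_append_I m]
    simp

/-- There exists a sequence `(I n)` of nonempty finite words over `{1,2}` with
`I 0 = 1` and `I 1 = 21`, such that for every `n ≥ 1`: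
`V (n-1) V n = 2 J n I n`, `V n = 2 J n I (n-1)`, and the first letter of `I n`
differs from the first letter of `I (n-1)`. -/
theorem exists_I :
    ∃ I : ℕ → List ℕ,
      (∀ n, I n ≠ []) ∧ I 0 = [1] ∧ I 1 = [2, 1] ∧
      ∀ n : ℕ, 1 ≤ n →
        V (n-1) ++ V n = [2] ++ J n ++ I n ∧
        V n = [2] ++ J n ++ I (n-1) ∧
        (I n).head? ≠ (I (n-1)).head? := by
  refine ⟨I, I_ne_nil, rfl, rfl, fun n hn => ?_⟩
  obtain ⟨m, rfl⟩ := Nat.exists_eq_add_of_le' hn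
  simp only [Nat.add_sub_cancel, V, List.append_assoc, head?_I]
  refine ⟨?_, ?_, by simp only [ne_eq, Option.some.injEq]; omega⟩
  · simpa using (J_succ_append_I_succ m).symm
  · rw [J_succ_append_I]
end

section
/- (Lemma 2) For every n ≥ 1, with R'_n = φ(U'_n) and S'_n = T^{3ℓ_n+ℓ_{n−1}+4} − 1, one has v(θ − R'_n(X^{-1})/S'_n(X^{-1})) = 2(3ℓ_n + ℓ_{n−1} + 4) + (ℓ_n + ℓ_{n−1} + 1)/2; equivalently, |θ − R'_n/S'_n| = |S'_n|^{−ω'_n} where ω'_n = 2 + (ℓ_n + ℓ_{n−1} + 1)/(6ℓ_n + 2ℓ_{n−1} + 8). -/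
/-- `ℓ n` is the length of the word `W n`. -/
def ell (n : ℕ) : ℕ := (W n).length

/-- `w n` is the `n`-th letter (for `n ≥ 1`) of the common infinite extension of
the words `W n` (each `W n` being a prefix of `W (n+1)`, and `ℓ n ≥ n`). -/
def w (n : ℕ) : ℕ := (W n).getD (n-1) 0

/-- `θ = ∑_{n ≥ 1} w(n) Xⁿ`, as a formal Laurent series over `ℚ`. -/
noncomputable def theta : LaurentSeries ℚ :=
  ((PowerSeries.mk fun n => if n = 0 then 0 else (w n : ℚ)) : PowerSeries ℚ)

/-- A polynomial `P ∈ ℚ[T]` regarded as the element `P(X⁻¹)` of `ℚ((X))`. -/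
noncomputable def evalTinv (P : Polynomial ℚ) : LaurentSeries ℚ :=
  Polynomial.aeval (((PowerSeries.X : PowerSeries ℚ) : LaurentSeries ℚ))⁻¹ P

/-- `φ(M) = m₁ T^(k-1) + m₂ T^(k-2) + ⋯ + m_k ∈ ℚ[T]` for a word `M = m₁ m₂ ⋯ m_k`. -/
noncomputable def phi (M : List ℕ) : Polynomial ℚ :=
  M.foldl (fun acc m => acc * Polynomial.X + Polynomial.C (m : ℚ)) 0

/-- `R' n = φ(U' n) ∈ ℚ[T]`. -/
noncomputable def R' (n : ℕ) : Polynomial ℚ := phi (U' n)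

/-- `S' n = T^(3 ℓ n + ℓ (n-1) + 4) - 1 ∈ ℚ[T]`. -/
noncomputable def S' (n : ℕ) : Polynomial ℚ :=
  Polynomial.X ^ (3 * ell n + ell (n-1) + 4) - 1

/-!
`S'_n(X⁻¹) = X^{-L} (1 - X^L)` with `L = |U'_n| = 3ℓ_n + ℓ_{n-1} + 4`, so `R'_n / S'_n` is the
expansion `X ∑ⱼ U'_n[j mod L] Xʲ` of the periodic word `(U'_n)^∞`, and the order of
`θ - R'_n/S'_n` is one more than the length of the longest common prefix of `w` and `(U'_n)^∞`.
Since `W_{n+3} = (U'_n)² W_{n-1} 2 W_n ⋯` while `(U'_n)³ = (U'_n)² W_n 2 W_{n-1} ⋯`, that prefix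
has length `2L + m`, where `m` is the length of the longest common prefix of `W_{n-1} 2 W_n` and
`W_n 2 W_{n-1}`; the recursion `W_{n+1} = W_n 2 W_{n-1} 2 W_n` gives `m = (ℓ_n + ℓ_{n-1} - 1)/2`
by induction.
-/

theorem List.IsPrefix.getD_eq {α : Type*} {u v : List α} (h : u <+: v) {i : ℕ}
    (hi : i < u.length) (d : α) : v.getD i d = u.getD i d := by
  rw [List.getD_eq_getElem _ _ hi, List.getD_eq_getElem _ _ (hi.trans_le h.length_le),
    h.getElem hi]

theorem List.getD_append_append_self {α : Type*} (u : List α) {j : ℕ}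
    (hj : j < 3 * u.length) (d : α) : (u ++ u ++ u).getD j d = u.getD (j % u.length) d := by
  have hper : (u ++ u ++ u).HasPeriod u.length := by
    simp [List.HasPeriod, List.append_assoc]
  have hpos : 0 < u.length := by omega
  simp only [List.getD_eq_getElem?_getD]
  rw [← hper.getElem?_mod _ _ _ (by simp only [List.length_append]; omega), List.append_assoc,
    List.getElem?_append_left (Nat.mod_lt _ hpos)]

def DivergeAt {α : Type*} (u v : List α) (m : ℕ) : Prop :=
  ∃ (C : List α) (x y : α), C.length = m ∧ x ≠ y ∧ C ++ [x] <+: u ∧ C ++ [y] <+: v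

namespace DivergeAt

variable {α : Type*} {u v u' v' : List α} {m : ℕ}

theorem symm (h : DivergeAt u v m) : DivergeAt v u m :=
  let ⟨C, x, y, hC, hxy, hx, hy⟩ := h
  ⟨C, y, x, hC, hxy.symm, hy, hx⟩

theorem mono (h : DivergeAt u v m) (hu : u <+: u') (hv : v <+: v') : DivergeAt u' v' m :=
  let ⟨C, x, y, hC, hxy, hx, hy⟩ := h
  ⟨C, x, y, hC, hxy, hx.trans hu, hy.trans hv⟩

theorem append_left (h : DivergeAt u v m) (p : List α) :
    DivergeAt (p ++ u) (p ++ v) (p.length + m) := by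
  obtain ⟨C, x, y, rfl, hxy, hx, hy⟩ := h
  refine ⟨p ++ C, x, y, List.length_append, hxy, ?_, ?_⟩ <;>
    simpa [List.prefix_append_right_inj] using ‹_›

theorem lt_length_left (h : DivergeAt u v m) : m < u.length := by
  obtain ⟨C, x, y, rfl, -, hx, -⟩ := h
  simpa using hx.length_le

theorem lt_length_right (h : DivergeAt u v m) : m < v.length :=
  h.symm.lt_length_left

theorem getD_eq (h : DivergeAt u v m) {i : ℕ} (hi : i < m) (d : α) :
    u.getD i d = v.getD i d := by
  obtain ⟨C, x, y, rfl, -, hx, hy⟩ := h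
  have hi' : i < (C ++ [x]).length := by simp; omega
  rw [hx.getD_eq hi', hy.getD_eq (by simpa using hi'), List.getD_append _ _ _ _ hi,
    List.getD_append _ _ _ _ hi]

theorem getD_ne (h : DivergeAt u v m) (d : α) : u.getD m d ≠ v.getD m d := by
  obtain ⟨C, x, y, rfl, hxy, hx, hy⟩ := h
  rw [hx.getD_eq (by simp), hy.getD_eq (by simp)]
  simpa using hxy

end DivergeAt

section Series

variable (R : Type*)

noncomputable def wordSeries [Semiring R] (u : List ℕ) : PowerSeries R :=
  PowerSeries.mk fun j => (u.getD j 0 : R)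

noncomputable def periodicSeries [Semiring R] (u : List ℕ) : PowerSeries R :=
  PowerSeries.mk fun j => (u.getD (j % u.length) 0 : R)

variable {R}

theorem wordSeries_append_singleton [Semiring R] (u : List ℕ) (a : ℕ) :
    wordSeries R (u ++ [a]) =
      wordSeries R u + PowerSeries.C (a : R) * PowerSeries.X ^ u.length := by
  ext j
  simp only [wordSeries, PowerSeries.coeff_mk, map_add, PowerSeries.coeff_C_mul_X_pow]
  rcases lt_trichotomy j u.length with h | rfl | h
  · rw [List.getD_append _ _ _ _ h, if_neg h.ne, add_zero]
  · rw [List.getD_append_right _ _ _ _ le_rfl, Nat.sub_self, if_pos rfl,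
      List.getD_eq_default _ _ le_rfl]
    simp
  · rw [List.getD_eq_default _ _ (by simp; omega), List.getD_eq_default _ _ h.le, if_neg h.ne']
    simp

theorem periodicSeries_mul_one_sub_X_pow [Ring R] (u : List ℕ) :
    periodicSeries R u * (1 - PowerSeries.X ^ u.length) = wordSeries R u := by
  ext j
  rw [mul_sub, mul_one, map_sub, PowerSeries.coeff_mul_X_pow']
  simp only [periodicSeries, wordSeries, PowerSeries.coeff_mk]
  split_ifs with h
  · rw [← Nat.mod_eq_sub_mod h, sub_self, List.getD_eq_default _ _ h, Nat.cast_zero]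
  · rw [Nat.mod_eq_of_lt (not_le.mp h), sub_zero]

end Series

theorem order_coe_eq_of_coeff {R : Type*} [Semiring R] {F : PowerSeries R} {d : ℕ}
    (hlt : ∀ i < d, PowerSeries.coeff i F = 0) (hd : PowerSeries.coeff d F ≠ 0) :
    (F : LaurentSeries R).order = d := by
  have hd' : (F : LaurentSeries R).coeff d ≠ 0 := by simpa [PowerSeries.coeff_coe] using hd
  refine le_antisymm (HahnSeries.order_le_of_coeff_ne_zero hd')
    ((HahnSeries.le_order_iff_forall (HahnSeries.ne_zero_of_coeff_ne_zero hd')).2 fun j hj => ?_)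
  rw [PowerSeries.coeff_coe]
  split_ifs with hneg
  · rfl
  · exact hlt _ (by omega)

theorem order_coe_X_mul_sub {R : Type*} [Ring R] {F G : PowerSeries R} {m : ℕ}
    (heq : ∀ i < m, PowerSeries.coeff i F = PowerSeries.coeff i G)
    (hne : PowerSeries.coeff m F ≠ PowerSeries.coeff m G) :
    ((PowerSeries.X * (F - G) : PowerSeries R) : LaurentSeries R).order = m + 1 := by
  refine order_coe_eq_of_coeff (fun i hi => ?_) ?_
  · rcases i with _ | i
    · exact PowerSeries.coeff_zero_X_mul _
    · rw [PowerSeries.coeff_succ_X_mul, map_sub, heq i (Nat.lt_of_succ_lt_succ hi), sub_self]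
  · rwa [PowerSeries.coeff_succ_X_mul, map_sub, sub_ne_zero]

local notation "𝕏" => ((PowerSeries.X : PowerSeries ℚ) : LaurentSeries ℚ)

theorem coe_X_ne_zero : 𝕏 ≠ 0 := by
  simp

theorem evalTinv_phi_mul_X_pow (M : List ℕ) :
    evalTinv (phi M) * 𝕏 ^ M.length = 𝕏 * (wordSeries ℚ M : LaurentSeries ℚ) := by
  induction M using List.reverseRecOn with
  | nil =>
    have : wordSeries ℚ [] = 0 := by ext; simp [wordSeries]
    simp [phi, evalTinv, this]
  | append_singleton M a ih =>
    have hphi : phi (M ++ [a]) = phi M * Polynomial.X + Polynomial.C (a : ℚ) := by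
      simp [phi, List.foldl_append]
    have heval : evalTinv (phi (M ++ [a])) = evalTinv (phi M) * 𝕏⁻¹ + a := by
      simp [hphi, evalTinv]
    rw [heval, wordSeries_append_singleton, List.length_append, List.length_singleton, pow_succ]
    simp only [map_add, map_mul, map_pow, map_natCast]
    linear_combination ih + evalTinv (phi M) * 𝕏 ^ M.length * inv_mul_cancel₀ coe_X_ne_zero

theorem evalTinv_phi_div_evalTinv_X_pow_sub_one {M : List ℕ} (hM : M ≠ []) :
    evalTinv (phi M) / evalTinv (Polynomial.X ^ M.length - 1) =
      ((PowerSeries.X * periodicSeries ℚ M : PowerSeries ℚ) : LaurentSeries ℚ) := by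
  have hL : M.length ≠ 0 := by simpa using hM
  have hpow : 𝕏 ^ M.length * 𝕏⁻¹ ^ M.length = 1 := by
    rw [← mul_pow, mul_inv_cancel₀ coe_X_ne_zero, one_pow]
  have hD : evalTinv (Polynomial.X ^ M.length - 1) = 𝕏⁻¹ ^ M.length * (1 - 𝕏 ^ M.length) := by
    simp only [evalTinv, map_sub, map_pow, Polynomial.aeval_X, map_one]
    linear_combination hpow
  have hq : (1 : LaurentSeries ℚ) - 𝕏 ^ M.length ≠ 0 := by
    have h1 : (1 - PowerSeries.X ^ M.length : PowerSeries ℚ) ≠ 0 := fun h => by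
      simpa [hL] using congrArg PowerSeries.constantCoeff h
    simpa using (HahnSeries.ofPowerSeries_injective (Γ := ℤ) (R := ℚ)).ne h1
  have key := evalTinv_phi_mul_X_pow M
  rw [← periodicSeries_mul_one_sub_X_pow, map_mul, map_sub, map_one, map_pow] at key
  rw [hD, map_mul, div_eq_iff (mul_ne_zero (pow_ne_zero _ (inv_ne_zero coe_X_ne_zero)) hq)]
  linear_combination 𝕏⁻¹ ^ M.length * key - evalTinv (phi M) * hpow

theorem theta_eq_coe_X_mul : theta = ((PowerSeries.X * PowerSeries.mk fun j => (w (j + 1) : ℚ) :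
    PowerSeries ℚ) : LaurentSeries ℚ) := by
  rw [theta]
  congr 1
  ext (_ | j) <;> simp [PowerSeries.coeff_succ_X_mul]

theorem W_add_two (n : ℕ) : W (n + 2) = W (n + 1) ++ [2] ++ W n ++ [2] ++ W (n + 1) := rfl

theorem ell_add_two (n : ℕ) : ell (n + 2) = 2 * ell (n + 1) + ell n + 2 := by
  simp only [ell, W_add_two, List.length_append, List.length_singleton]
  ring

theorem odd_ell_add_ell_succ : ∀ n, Odd (ell n + ell (n + 1))
  | 0 => by decide
  | n + 1 => by
    rw [ell_add_two, show ell (n + 1) + (2 * ell (n + 1) + ell n + 2)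
      = ell n + ell (n + 1) + 2 * (ell (n + 1) + 1) by ring]
    exact (odd_ell_add_ell_succ n).add_even (even_two_mul _)

theorem le_ell : ∀ n, n ≤ ell n
  | 0 => le_rfl
  | 1 => le_rfl
  | n + 2 => by have := le_ell (n + 1); rw [ell_add_two]; omega

theorem W_prefix_W_succ : ∀ n, W n <+: W (n + 1)
  | 0 => List.nil_prefix
  | n + 1 => ⟨[2] ++ W n ++ [2] ++ W (n + 1), by simp [W_add_two]⟩

theorem W_prefix_W_of_le {m k : ℕ} (h : m ≤ k) : W m <+: W k := by
  induction k, h using Nat.le_induction with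
  | base => exact List.prefix_refl _
  | succ k _ ih => exact ih.trans (W_prefix_W_succ k)

theorem w_succ_eq_getD {i m : ℕ} (hi : i < ell m) : w (i + 1) = (W m).getD i 0 := by
  have hi' : i < ell (i + 1) := le_ell (i + 1)
  rcases le_total (i + 1) m with h | h
  · exact ((W_prefix_W_of_le h).getD_eq hi' 0).symm
  · exact (W_prefix_W_of_le h).getD_eq hi 0

theorem length_U' (n : ℕ) : (U' (n + 1)).length = 3 * ell (n + 1) + ell n + 4 := by
  simp only [U', ell, W_add_two, List.length_append, List.length_singleton]
  omega

theorem divergeAt_W : ∀ n,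
    DivergeAt (W n ++ [2] ++ W (n + 1)) (W (n + 1) ++ [2] ++ W n) ((ell n + ell (n + 1)) / 2)
  | 0 => ⟨[], 2, 1, rfl, by decide, ⟨[1], rfl⟩, ⟨[2], rfl⟩⟩
  | n + 1 => by
    have h := ((divergeAt_W n).symm.mono (List.prefix_append _ ([2] ++ W (n + 1)))
      (List.prefix_append _ ([2] ++ W (n + 1)))).append_left (W (n + 1) ++ [2])
    convert h using 1
    · simp [W_add_two]
    · simp [W_add_two]
    · have := ell_add_two n
      rw [List.length_append, List.length_singleton]
      change (ell (n + 1) + ell (n + 2)) / 2 = ell (n + 1) + 1 + (ell n + ell (n + 1)) / 2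
      omega

theorem divergeAt_W_U' (n : ℕ) :
    DivergeAt (W (n + 4)) (U' (n + 1) ++ U' (n + 1) ++ U' (n + 1))
      (2 * (U' (n + 1)).length + (ell n + ell (n + 1)) / 2) := by
  have h := ((divergeAt_W n).mono (List.prefix_append _ ([2] ++ W (n + 3)))
    (List.prefix_append _ ([2] ++ W (n + 1) ++ [2] ++ W (n + 1) ++ [2]))).append_left
      (U' (n + 1) ++ U' (n + 1))
  convert h using 1
  · simp [U', W_add_two]
  · simp [U', W_add_two]
  · simp only [List.length_append]
    omega

theorem w_succ_eq_getD_U'_mod (n : ℕ) {i : ℕ}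
    (hi : i < 2 * (U' (n + 1)).length + (ell n + ell (n + 1)) / 2) :
    w (i + 1) = (U' (n + 1)).getD (i % (U' (n + 1)).length) 0 := by
  have h := divergeAt_W_U' n
  have := h.lt_length_right
  rw [w_succ_eq_getD (hi.trans h.lt_length_left), h.getD_eq hi,
    List.getD_append_append_self _ (by simp only [List.length_append] at this; omega)]

theorem w_succ_ne_getD_U'_mod (n : ℕ) :
    w (2 * (U' (n + 1)).length + (ell n + ell (n + 1)) / 2 + 1) ≠
      (U' (n + 1)).getD ((2 * (U' (n + 1)).length + (ell n + ell (n + 1)) / 2) %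
        (U' (n + 1)).length) 0 := by
  have h := divergeAt_W_U' n
  have := h.lt_length_right
  rw [w_succ_eq_getD h.lt_length_left,
    ← List.getD_append_append_self _ (by simp only [List.length_append] at this; omega)]
  exact h.getD_ne 0

/-- (Lemma 2) For every `n ≥ 1`,
`v(θ - R' n(X⁻¹)/S' n(X⁻¹)) = 2 (3 ℓ n + ℓ (n-1) + 4) + (ℓ n + ℓ (n-1) + 1)/2`, i.e.
`|θ - R'ₙ/S'ₙ| = |S'ₙ|^(-ω'ₙ)` with `ω'ₙ = 2 + (ℓ n + ℓ (n-1) + 1)/(6 ℓ n + 2 ℓ (n-1) + 8)`. -/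
theorem lemma2 (n : ℕ) (hn : 1 ≤ n) :
    (theta - evalTinv (R' n) / evalTinv (S' n)).order =
      ((2 * (3 * ell n + ell (n-1) + 4) + (ell n + ell (n-1) + 1) / 2 : ℕ) : ℤ) := by
  obtain ⟨n, rfl⟩ : ∃ k, n = k + 1 := ⟨n - 1, by omega⟩
  have hS : S' (n + 1) = Polynomial.X ^ (U' (n + 1)).length - 1 := by rw [length_U']; rfl
  rw [R', hS, evalTinv_phi_div_evalTinv_X_pow_sub_one (by simp [U']), theta_eq_coe_X_mul,
    ← map_sub, ← mul_sub,
    order_coe_X_mul_sub (m := 2 * (U' (n + 1)).length + (ell n + ell (n + 1)) / 2)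
      (fun i hi => by simp [periodicSeries, w_succ_eq_getD_U'_mod n hi])
      (by simpa [periodicSeries] using w_succ_ne_getD_U'_mod n), length_U']
  obtain ⟨k, hk⟩ := odd_ell_add_ell_succ n
  simp only [Nat.add_sub_cancel]
  omega
end

section
/- For every n ≥ 1 the identities R'_{n+1} = P_n R_{n+1} + R'_n and R_{n+1} = Q_n R'_n − R_n hold in ℚ[T], where P_n = T^{(3ℓ_n+ℓ_{n−1}+3)/2}(T^{ℓ_{n+1}+1} + 1) and Q_n = T^{(ℓ_n+ℓ_{n−1}+3)/2}. -/
/-- `S n = T^((ℓ n + ℓ (n-1) + 3)/2) (T^(ℓ n + 1) - 1) ∈ ℚ[T]`. -/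
noncomputable def S (n : ℕ) : Polynomial ℚ :=
  Polynomial.X ^ ((ell n + ell (n-1) + 3) / 2) * (Polynomial.X ^ (ell n + 1) - 1)

/-- `R n = φ(G (n+1)) - φ(G n) ∈ ℚ[T]`. -/
noncomputable def R (n : ℕ) : Polynomial ℚ := phi (G (n+1)) - phi (G n)

/-- `P n = T^((3 ℓ n + ℓ (n-1) + 3)/2) (T^(ℓ (n+1) + 1) + 1) ∈ ℚ[T]`. -/
noncomputable def P (n : ℕ) : Polynomial ℚ :=
  Polynomial.X ^ ((3 * ell n + ell (n-1) + 3) / 2) * (Polynomial.X ^ (ell (n+1) + 1) + 1)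

/-- `Q n = T^((ℓ n + ℓ (n-1) + 3)/2) ∈ ℚ[T]`. -/
noncomputable def Q (n : ℕ) : Polynomial ℚ :=
  Polynomial.X ^ ((ell n + ell (n-1) + 3) / 2)

open Polynomial

private lemma phi_eq (M : List ℕ) :
    phi M = (M.map (fun m : ℕ => (m : ℚ))).foldl (fun acc m => acc * X + C m) 0 := by
  simp only [phi]
  congr 1
  induction M with
  | nil => rfl
  | cons a t ih =>
      have h : (do let a ← (a :: t); pure ((a:ℚ)))
          = ((a:ℚ)) :: (do let a' ← t; pure ((a':ℚ))) := rfl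
      rw [h, ih]
      rfl

private lemma psi_foldl (B : List ℚ) : ∀ a : Polynomial ℚ,
    B.foldl (fun acc m => acc * X + C m) a
      = a * X ^ B.length + B.foldl (fun acc m => acc * X + C m) 0 := by
  induction B with
  | nil => intro a; simp
  | cons m B ih =>
      intro a
      simp only [List.foldl_cons, List.length_cons, zero_mul, zero_add]
      rw [ih (a * X + C m), ih (C m)]
      ring

private lemma phi_append (A B : List ℕ) :
    phi (A ++ B) = phi A * X ^ B.length + phi B := by
  rw [phi_eq (A ++ B), phi_eq A, phi_eq B, List.map_append, List.foldl_append,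
    psi_foldl, List.length_map]

private lemma phi_two : phi [2] = 2 := by simp [phi, map_ofNat]

private lemma ell_rec (n : ℕ) : ell (n+2) = 2 * ell (n+1) + ell n + 2 := by
  show (W (n+2)).length = _
  rw [show W (n+2) = W (n+1) ++ [2] ++ W n ++ [2] ++ W (n+1) from rfl]
  simp [ell, List.length_append]
  ring

private lemma w_rec (n : ℕ) :
    phi (W (n+2)) = phi (W (n+1)) * X ^ (ell (n+1) + ell n + 2)
      + 2 * X ^ (ell (n+1) + ell n + 1) + phi (W n) * X ^ (ell (n+1) + 1)
      + 2 * X ^ (ell (n+1)) + phi (W (n+1)) := by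
  rw [show W (n+2) = W (n+1) ++ [2] ++ W n ++ [2] ++ W (n+1) from rfl,
    phi_append, phi_append, phi_append, phi_append, phi_two]
  simp only [List.length_cons, List.length_nil, ell]
  ring

private lemma R'_eq (n : ℕ) :
    R' n = phi (W (n+1)) * X ^ (ell n + 2) + 2 * X ^ (ell n + 1) + phi (W n) * X + 2 := by
  rw [show R' n = phi (W (n+1) ++ [2] ++ W n ++ [2]) from rfl,
    phi_append, phi_append, phi_append, phi_two]
  simp only [List.length_cons, List.length_nil, ell]
  ring

private lemma G_concat (n : ℕ) : G (n+3) = U' (n+1) ++ G (n+1) := by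
  show U (n+2) ++ ([2] ++ G (n+1)) = U' (n+1) ++ G (n+1)
  simp [U, U', List.append_assoc]

private lemma two_g : ∀ n, 2 * (G (n+1)).length = ell (n+1) + ell n + 3
  | 0 => rfl
  | 1 => rfl
  | (n+2) => by
      show 2 * (G (n+3)).length = ell (n+3) + ell (n+2) + 3
      have ih := two_g n
      have hlen : (G (n+3)).length = (ell (n+2) + 1 + ell (n+1) + 1) + (G (n+1)).length := by
        rw [G_concat n]
        simp [U', ell, List.length_append]
        have hb : (W (n+1+1)).length = (W (n+2)).length := rfl
        omega
      have h2 : ell (n+2) = 2 * ell (n+1) + ell n + 2 := ell_rec n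
      have h3 : ell (n+3) = 2 * ell (n+2) + ell (n+1) + 2 := ell_rec (n+1)
      omega

private lemma g_succ (n : ℕ) : (G (n+2)).length = (G (n+1)).length + ell (n+1) + 1 := by
  have h1 := two_g n
  have h2 : 2 * (G (n+2)).length = ell (n+2) + ell (n+1) + 3 := two_g (n+1)
  have h3 := ell_rec n
  omega

private lemma keyE : ∀ n : ℕ,
    (phi (W (n+1)) * X + 2) * (X ^ (ell (n+2) + 1) - 1)
      - (phi (W (n+2)) * X + 2) * (X ^ (ell (n+1) + 1) - 1)
    = (-1 : Polynomial ℚ) ^ (n+1) * X ^ ((G (n+1)).length + ell (n+1)) * (X - 1) := by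
  intro n
  induction n with
  | zero =>
      show (phi (W 1) * X + 2) * (X ^ (ell 2 + 1) - 1)
          - (phi (W 2) * X + 2) * (X ^ (ell 1 + 1) - 1)
        = (-1 : Polynomial ℚ) ^ 1 * X ^ ((G 1).length + ell 1) * (X - 1)
      have hW1 : phi (W 1) = 1 := by simp [phi, W]
      have hW2 : phi (W 2) = X ^ 3 + 2 * X ^ 2 + 2 * X + 1 := by
        rw [show W 2 = [1,2,2,1] from rfl]
        simp [phi, map_ofNat]
        ring
      have hg : (G 1).length = 2 := rfl
      have he1 : ell 1 = 1 := rfl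
      have he2 : ell 2 = 4 := rfl
      rw [hW1, hW2, hg, he1, he2]
      ring
  | succ n ih =>
      show (phi (W (n+2)) * X + 2) * (X ^ (ell (n+3) + 1) - 1)
          - (phi (W (n+3)) * X + 2) * (X ^ (ell (n+2) + 1) - 1)
        = (-1 : Polynomial ℚ) ^ (n+2) * X ^ ((G (n+2)).length + ell (n+2)) * (X - 1)
      have hw : phi (W (n+3)) = phi (W (n+2)) * X ^ (ell (n+2) + ell (n+1) + 2)
          + 2 * X ^ (ell (n+2) + ell (n+1) + 1) + phi (W (n+1)) * X ^ (ell (n+2) + 1)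
          + 2 * X ^ (ell (n+2)) + phi (W (n+2)) := w_rec (n+1)
      have he : ell (n+3) = 2 * ell (n+2) + ell (n+1) + 2 := ell_rec (n+1)
      rw [hw, he, g_succ n,
        show ((-1 : Polynomial ℚ)) ^ (n+2) = (-1) ^ (n+1) * (-1) from pow_succ _ _]
      rw [ell_rec n] at ih ⊢
      linear_combination (-(X : Polynomial ℚ) ^ (2 * ell (n+1) + ell n + 3)) * ih

private lemma R_rec (n : ℕ) :
    R (n+2) = X ^ (G (n+1)).length * R' (n+1) - R (n+1) := by
  show phi (G (n+3)) - phi (G (n+2)) = _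
  rw [G_concat n, phi_append]
  rw [show phi (U' (n+1)) = R' (n+1) from rfl, R]
  ring

private lemma Cform : ∀ n : ℕ,
    R (n+1) = (phi (W (n+1)) * X + 2) * X ^ (G (n+1)).length
      + (-1 : Polynomial ℚ) ^ (n+1) * (1 - X) := by
  intro n
  induction n with
  | zero =>
      show R 1 = (phi (W 1) * X + 2) * X ^ (G 1).length + (-1 : Polynomial ℚ) ^ 1 * (1 - X)
      have hW1 : phi (W 1) = 1 := by simp [phi, W]
      have hG1 : phi (G 1) = X + 2 := by
        rw [show G 1 = [1,2] from rfl]; simp [phi, map_ofNat]; try ring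
      have hG2 : phi (G 2) = X ^ 3 + 2 * X ^ 2 + 2 * X + 1 := by
        rw [show G 2 = [1,2,2,1] from rfl]; simp [phi, map_ofNat]; try ring
      have hg : (G 1).length = 2 := rfl
      rw [show R 1 = phi (G 2) - phi (G 1) from rfl, hG1, hG2, hW1, hg]
      ring
  | succ n ih =>
      show R (n+2) = (phi (W (n+2)) * X + 2) * X ^ (G (n+2)).length
          + (-1 : Polynomial ℚ) ^ (n+2) * (1 - X)
      have hR' : R' (n+1) = phi (W (n+2)) * X ^ (ell (n+1) + 2) + 2 * X ^ (ell (n+1) + 1)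
          + phi (W (n+1)) * X + 2 := R'_eq (n+1)
      rw [R_rec n, ih, hR', g_succ n,
        show ((-1 : Polynomial ℚ)) ^ (n+2) = (-1) ^ (n+1) * (-1) from pow_succ _ _]
      ring

/-- For every `n ≥ 1`, `R' (n+1) = P n · R (n+1) + R' n` and
`R (n+1) = Q n · R' n - R n` in `ℚ[T]`. -/
theorem R_recurrences (n : ℕ) (hn : 1 ≤ n) :
    R' (n+1) = P n * R (n+1) + R' n ∧ R (n+1) = Q n * R' n - R n := by
  obtain ⟨m, rfl⟩ : ∃ m, n = m + 1 := ⟨n - 1, by omega⟩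
  have h2g := two_g m
  constructor
  · -- part 1
    show R' (m+2) = P (m+1) * R (m+2) + R' (m+1)
    have hP : P (m+1) = X ^ ((G (m+1)).length + ell (m+1)) * (X ^ (ell (m+2) + 1) + 1) := by
      show X ^ ((3 * ell (m+1) + ell m + 3) / 2) * (X ^ (ell (m+2) + 1) + 1) = _
      congr 2
      omega
    have hE := keyE m
    have hy : (X : Polynomial ℚ) ^ (2 * (G (m+1)).length) = X ^ (ell (m+1) + ell m + 3) := by
      rw [h2g]
    have hC : R (m+2) = (phi (W (m+2)) * X + 2) * X ^ (G (m+2)).length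
        + (-1 : Polynomial ℚ) ^ (m+2) * (1 - X) := Cform (m+1)
    have hR1 : R' (m+1) = phi (W (m+2)) * X ^ (ell (m+1) + 2) + 2 * X ^ (ell (m+1) + 1)
        + phi (W (m+1)) * X + 2 := R'_eq (m+1)
    have hR2 : R' (m+2) = phi (W (m+3)) * X ^ (ell (m+2) + 2) + 2 * X ^ (ell (m+2) + 1)
        + phi (W (m+2)) * X + 2 := R'_eq (m+2)
    have hw : phi (W (m+3)) = phi (W (m+2)) * X ^ (ell (m+2) + ell (m+1) + 2)
        + 2 * X ^ (ell (m+2) + ell (m+1) + 1) + phi (W (m+1)) * X ^ (ell (m+2) + 1)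
        + 2 * X ^ (ell (m+2)) + phi (W (m+2)) := w_rec (m+1)
    rw [hw] at hR2
    rw [g_succ m, show ((-1 : Polynomial ℚ)) ^ (m+2) = (-1) ^ (m+1) * (-1) from pow_succ _ _] at hC
    rw [ell_rec m] at hP hE hR2
    rw [hP, hC, hR1, hR2]
    linear_combination ((X : Polynomial ℚ) ^ (2 * ell (m+1) + ell m + 3) + 1) * hE
      - (phi (W (m+2)) * X + 2) * X ^ (2 * ell (m+1) + 1) *
        ((X : Polynomial ℚ) ^ (2 * ell (m+1) + ell m + 3) + 1) * hy
  · -- part 2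
    show R (m+2) = Q (m+1) * R' (m+1) - R (m+1)
    have hQ : Q (m+1) = X ^ (G (m+1)).length := by
      show X ^ ((ell (m+1) + ell m + 3) / 2) = _
      congr 1
      omega
    rw [R_rec m, hQ]
end
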